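/- arXiv:2006.06184 — 4 statements merged into one kernel-verified Lean document; each statement's English description precedes it below -/
import Mathlib

section
/- Let Σ⁺ be a one-sided countable Markov shift over a countable alphabet 𝒜 in which every 1-cylinder [a] is nonempty. Let D ∈ ℕ and let r : 𝒜 → ℕ≥1 be a function such that for every n ≥ 1 the fiber r⁻¹(n) is nonempty and has at most D elements. Suppose f, g : Σ⁺ → ℝ satisfy |f(x) − 2·log r(x₁)| ≤ C and |g(x) − 2·log r(x₁)| ≤ C for all x ∈ Σ⁺, where C > 0 is a constant. Then for all real numbers a, b ≥ 0 with a + b > 0 and all t ∈ ℝ, one has Z₁(−t(a·f + b·g)) < +∞ if and only if t > 1/(2(a+b)). -/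
open scoped ENNReal NNReal

/-- The one-sided countable Markov shift `Σ⁺` over the alphabet `A` with transition
matrix `T` (where `T a b` means the transition `a → b` is allowed). -/
abbrev MarkovShift {A : Type*} (T : A → A → Prop) : Type _ :=
  {x : ℕ → A // ∀ i, T (x i) (x (i + 1))}

/-- The partition function `Z₁(h) = Σ_{a ∈ 𝒜} exp (sup {h x : x ∈ [a]})`,
valued in `[0, +∞]`. -/
noncomputable def Z1 {A : Type*} (T : A → A → Prop) (h : MarkovShift T → ℝ) : ℝ≥0∞ :=
  ∑' c : A, ENNReal.ofReal (Real.exp (sSup (h '' {x : MarkovShift T | x.1 0 = c})))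

/-!
Up to a bounded error the potential `-t (a f + b g)` equals `-2t(a+b) log r(x₁)`, so `Z₁` is
comparable to `Σ_c r(c)^(-2t(a+b))`. Since `r` takes every value `n ≥ 1` at least once and at
most `D` times, this sum is comparable to the `p`-series `Σ_n n^(-2t(a+b))`, which converges
exactly when `2t(a+b) > 1`.
-/

lemma ENNReal.tsum_ofReal_lt_top_iff_summable {α : Type*} {f : α → ℝ}
    (hf : ∀ i, 0 ≤ f i) :
    ∑' i, ENNReal.ofReal (f i) < ⊤ ↔ Summable f := by
  refine ⟨fun h => ?_, Summable.tsum_ofReal_lt_top⟩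
  simpa only [ENNReal.toReal_ofReal (hf _)] using ENNReal.summable_toReal h.ne

lemma ENNReal.tsum_lt_top_of_le_mul {α : Type*} {u v : α → ℝ≥0∞} {M : ℝ≥0∞}
    (hM : M ≠ ⊤) (huv : ∀ i, u i ≤ M * v i) (hv : ∑' i, v i < ⊤) : ∑' i, u i < ⊤ :=
  calc ∑' i, u i ≤ ∑' i, M * v i := ENNReal.tsum_le_tsum huv
    _ = M * ∑' i, v i := ENNReal.tsum_mul_left
    _ < ⊤ := ENNReal.mul_lt_top hM.lt_top hv

lemma ENNReal.tsum_comp_lt_top_iff_of_surjective {α β : Type*} {ρ : α → β}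
    (hρ : Function.Surjective ρ) {D : ℕ} (hfib : ∀ n, (ρ ⁻¹' {n}).encard ≤ D)
    (w : β → ℝ≥0∞) :
    ∑' c, w (ρ c) < ⊤ ↔ ∑' n, w n < ⊤ := by
  refine ⟨(ENNReal.tsum_le_tsum_comp_of_surjective hρ w).trans_lt, fun hw => ?_⟩
  rw [← ENNReal.tsum_fiberwise _ ρ]
  refine ENNReal.tsum_lt_top_of_le_mul (M := D) ENNReal.coe_ne_top (fun n => ?_) hw
  calc ∑' c : ρ ⁻¹' {n}, w (ρ c) = ∑' _ : ρ ⁻¹' {n}, w n :=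
        tsum_congr fun c => congrArg w c.2
    _ = (ρ ⁻¹' {n}).encard * w n := ENNReal.tsum_set_const _ _
    _ ≤ D * w n := by gcongr; exact_mod_cast ENat.toENNReal_le.2 (hfib n)

lemma ENNReal.tsum_ofReal_nat_add_one_rpow_neg_lt_top_iff (s : ℝ) :
    ∑' n : ℕ, ENNReal.ofReal (((n : ℝ) + 1) ^ (-s)) < ⊤ ↔ 1 < s := by
  rw [ENNReal.tsum_ofReal_lt_top_iff_summable fun n => by positivity,
    ← Real.summable_one_div_nat_add_rpow 1 s]
  refine summable_congr fun n => ?_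
  rw [abs_of_pos (by positivity), Real.rpow_neg (by positivity), one_div]

lemma abs_neg_mul_add_sub_le {u v ℓ C : ℝ} (hu : |u - ℓ| ≤ C) (hv : |v - ℓ| ≤ C)
    {a b : ℝ} (ha : 0 ≤ a) (hb : 0 ≤ b) (t : ℝ) :
    |-t * (a * u + b * v) - -t * (a + b) * ℓ| ≤ |t| * ((a + b) * C) := by
  have hconv : |a * (u - ℓ) + b * (v - ℓ)| ≤ (a + b) * C :=
    calc |a * (u - ℓ) + b * (v - ℓ)| ≤ |a * (u - ℓ)| + |b * (v - ℓ)| := abs_add_le _ _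
      _ = a * |u - ℓ| + b * |v - ℓ| := by
        rw [abs_mul, abs_mul, abs_of_nonneg ha, abs_of_nonneg hb]
      _ ≤ (a + b) * C := by nlinarith
  calc |-t * (a * u + b * v) - -t * (a + b) * ℓ| = |t| * |a * (u - ℓ) + b * (v - ℓ)| := by
        rw [← abs_neg t, ← abs_mul]; ring_nf
    _ ≤ |t| * ((a + b) * C) := by gcongr

lemma abs_sSup_image_sub_le {α : Type*} {S : Set α} (hS : S.Nonempty) {h : α → ℝ} {y K : ℝ}
    (hK : ∀ x ∈ S, |h x - y| ≤ K) : |sSup (h '' S) - y| ≤ K := by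
  have hup : ∀ z ∈ h '' S, z ≤ y + K := by
    rintro _ ⟨x, hx, rfl⟩
    linarith [(abs_le.1 (hK x hx)).2]
  obtain ⟨x₀, hx₀⟩ := hS
  have hx₀_le : h x₀ ≤ sSup (h '' S) := le_csSup ⟨_, hup⟩ ⟨x₀, hx₀, rfl⟩
  have hsup_le : sSup (h '' S) ≤ y + K := csSup_le ⟨_, x₀, hx₀, rfl⟩ hup
  rw [abs_le]
  constructor <;> linarith [(abs_le.1 (hK x₀ hx₀)).1]

lemma Z1_lt_top_iff_of_abs_sub_le {A : Type*} {T : A → A → Prop}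
    (hcyl : ∀ c : A, ∃ x : MarkovShift T, x.1 0 = c)
    {h : MarkovShift T → ℝ} {φ : A → ℝ} {K : ℝ} (hK : ∀ x, |h x - φ (x.1 0)| ≤ K) :
    Z1 T h < ⊤ ↔ ∑' c, ENNReal.ofReal (Real.exp (φ c)) < ⊤ := by
  have hsup : ∀ c, |sSup (h '' {x : MarkovShift T | x.1 0 = c}) - φ c| ≤ K := fun c =>
    abs_sSup_image_sub_le (hcyl c) fun x (hx : x.1 0 = c) => hx ▸ hK x
  have hexp : ∀ {u v : ℝ}, |u - v| ≤ K →
      ENNReal.ofReal (Real.exp u) ≤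
        ENNReal.ofReal (Real.exp K) * ENNReal.ofReal (Real.exp v) := by
    intro u v huv
    rw [← ENNReal.ofReal_mul (Real.exp_nonneg K), ← Real.exp_add]
    gcongr
    linarith [(abs_le.1 huv).2]
  exact ⟨ENNReal.tsum_lt_top_of_le_mul ENNReal.ofReal_ne_top fun c =>
      hexp (abs_sub_comm (φ c) _ ▸ hsup c),
    ENNReal.tsum_lt_top_of_le_mul ENNReal.ofReal_ne_top fun c => hexp (hsup c)⟩

lemma tsum_ofReal_rpow_neg_lt_top_iff {A : Type*} {r : A → ℕ} (hr : ∀ c, 1 ≤ r c)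
    (hfib_ne : ∀ n : ℕ, 1 ≤ n → ∃ c, r c = n)
    (hfib_fin : ∀ n : ℕ, 1 ≤ n → {c : A | r c = n}.Finite)
    {D : ℕ} (hfib_card : ∀ n : ℕ, 1 ≤ n → {c : A | r c = n}.ncard ≤ D) (s : ℝ) :
    ∑' c, ENNReal.ofReal ((r c : ℝ) ^ (-s)) < ⊤ ↔ 1 < s := by
  have hρ : Function.Surjective fun c => r c - 1 := fun n => by
    obtain ⟨c, hc⟩ := hfib_ne (n + 1) n.succ_pos
    exact ⟨c, show r c - 1 = n by omega⟩
  have hfib : ∀ n, ((fun c => r c - 1) ⁻¹' {n}).encard ≤ D := fun n => by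
    have hfiber : (fun c => r c - 1) ⁻¹' {n} = {c | r c = n + 1} := by
      ext c
      have := hr c
      show r c - 1 = n ↔ r c = n + 1
      omega
    rw [hfiber, Set.encard_le_coe_iff_finite_ncard_le]
    exact ⟨hfib_fin _ n.succ_pos, hfib_card _ n.succ_pos⟩
  have hr_cast : ∀ c, (r c : ℝ) = ((r c - 1 : ℕ) : ℝ) + 1 := fun c => by
    rw [Nat.cast_sub (hr c)]; ring
  simp_rw [hr_cast]
  rw [ENNReal.tsum_comp_lt_top_iff_of_surjective hρ hfib
      fun n => ENNReal.ofReal (((n : ℝ) + 1) ^ (-s)),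
    ENNReal.tsum_ofReal_nat_add_one_rpow_neg_lt_top_iff]

theorem stmt0_general {A : Type*} (T : A → A → Prop)
    (hcyl : ∀ c : A, ∃ x : MarkovShift T, x.1 0 = c)
    (D : ℕ) (r : A → ℕ) (hr : ∀ c, 1 ≤ r c)
    (hfib_ne : ∀ n : ℕ, 1 ≤ n → ∃ c, r c = n)
    (hfib_fin : ∀ n : ℕ, 1 ≤ n → {c : A | r c = n}.Finite)
    (hfib_card : ∀ n : ℕ, 1 ≤ n → {c : A | r c = n}.ncard ≤ D)
    (C : ℝ)
    (f g : MarkovShift T → ℝ)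
    (hf : ∀ x, |f x - 2 * Real.log (r (x.1 0))| ≤ C)
    (hg : ∀ x, |g x - 2 * Real.log (r (x.1 0))| ≤ C)
    (a b : ℝ) (ha : 0 ≤ a) (hb : 0 ≤ b) (hab : 0 < a + b) (t : ℝ) :
    Z1 T (fun x => -t * (a * f x + b * g x)) < ⊤ ↔ 1 / (2 * (a + b)) < t := by
  have hexp : ∀ c, Real.exp (-t * (a + b) * (2 * Real.log (r c))) =
      (r c : ℝ) ^ (-(2 * t * (a + b))) := fun c => by
    rw [Real.rpow_def_of_pos (by exact_mod_cast hr c)]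
    ring_nf
  rw [Z1_lt_top_iff_of_abs_sub_le hcyl (φ := fun c => -t * (a + b) * (2 * Real.log (r c)))
    fun x => abs_neg_mul_add_sub_le (hf x) (hg x) ha hb t]
  simp_rw [hexp]
  rw [tsum_ofReal_rpow_neg_lt_top_iff hr hfib_ne hfib_fin hfib_card, div_lt_iff₀ (by positivity)]
  constructor <;> intro <;> linarith

theorem stmt0 {A : Type*} [Countable A] (T : A → A → Prop)
    (hcyl : ∀ c : A, ∃ x : MarkovShift T, x.1 0 = c)
    (D : ℕ) (r : A → ℕ) (hr : ∀ c, 1 ≤ r c)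
    (hfib_ne : ∀ n : ℕ, 1 ≤ n → ∃ c, r c = n)
    (hfib_fin : ∀ n : ℕ, 1 ≤ n → {c : A | r c = n}.Finite)
    (hfib_card : ∀ n : ℕ, 1 ≤ n → {c : A | r c = n}.ncard ≤ D)
    (C : ℝ) (hC : 0 < C)
    (f g : MarkovShift T → ℝ)
    (hf : ∀ x, |f x - 2 * Real.log (r (x.1 0))| ≤ C)
    (hg : ∀ x, |g x - 2 * Real.log (r (x.1 0))| ≤ C)
    (a b : ℝ) (ha : 0 ≤ a) (hb : 0 ≤ b) (hab : 0 < a + b) (t : ℝ) :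
    Z1 T (fun x => -t * (a * f x + b * g x)) < ⊤ ↔ 1 / (2 * (a + b)) < t :=
  stmt0_general T hcyl D r hr hfib_ne hfib_fin hfib_card C f g hf hg a b ha hb hab t
end

section
/- Let I be a countable set and let u, v : I → [0, ∞). For w : I → [0, ∞) define the critical exponent δ(w) = inf{t > 0 : Σ_{i∈I} e^{−t·w_i} < +∞} ∈ [0, +∞] (with inf ∅ = +∞). Suppose h₁ = δ(u) and h₂ = δ(v) both lie in (0, ∞). Then for all a, b > 0, δ(a·u + b·v) ≤ (h₁·h₂)/(b·h₁ + a·h₂). -/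
/-!
For `s > h₁h₂/(b h₁ + a h₂)` put `p = s(b h₁ + a h₂)/h₂ > h₁` and `q = s(b h₁ + a h₂)/h₁ > h₂`.
Then `s(a uᵢ + b vᵢ)` is the convex combination `θ (p uᵢ) + (1 - θ) (q vᵢ)` with
`θ = a h₂/(b h₁ + a h₂)`, hence at least `min (p uᵢ) (q vᵢ)`, so
`e^{-s(a uᵢ + b vᵢ)} ≤ e^{-p uᵢ} + e^{-q vᵢ}` and the series at `s` converges.
-/

open scoped ENNReal

/-- The critical exponent `δ(w) = inf {t > 0 : Σ_{i ∈ I} e^{−t·wᵢ} < +∞}` of the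
Dirichlet series of `w`, valued in `[0, +∞]` (with `inf ∅ = +∞`). -/
noncomputable def critExp {I : Type*} (w : I → ℝ) : ℝ≥0∞ :=
  sInf {t : ℝ≥0∞ | ∃ s : ℝ, 0 < s ∧ t = ENNReal.ofReal s ∧
    (∑' i : I, ENNReal.ofReal (Real.exp (-(s * w i)))) < ⊤}

lemma Real.exp_neg_convexComb_le_add {x y θ : ℝ} (hθ₀ : 0 ≤ θ) (hθ₁ : θ ≤ 1) :
    Real.exp (-(θ * x + (1 - θ) * y)) ≤ Real.exp (-x) + Real.exp (-y) := by
  rcases le_total x y with hxy | hyx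
  · have : Real.exp (-(θ * x + (1 - θ) * y)) ≤ Real.exp (-x) :=
      Real.exp_le_exp.mpr (by nlinarith)
    linarith [Real.exp_pos (-y)]
  · have : Real.exp (-(θ * x + (1 - θ) * y)) ≤ Real.exp (-y) :=
      Real.exp_le_exp.mpr (by nlinarith)
    linarith [Real.exp_pos (-x)]

lemma tsum_ofReal_exp_neg_convexComb_lt_top {I : Type*} {x y : I → ℝ} {θ : ℝ}
    (hθ₀ : 0 ≤ θ) (hθ₁ : θ ≤ 1)
    (hx : ∑' i, ENNReal.ofReal (Real.exp (-x i)) < ⊤)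
    (hy : ∑' i, ENNReal.ofReal (Real.exp (-y i)) < ⊤) :
    ∑' i, ENNReal.ofReal (Real.exp (-(θ * x i + (1 - θ) * y i))) < ⊤ :=
  calc ∑' i, ENNReal.ofReal (Real.exp (-(θ * x i + (1 - θ) * y i)))
      ≤ ∑' i, (ENNReal.ofReal (Real.exp (-x i)) + ENNReal.ofReal (Real.exp (-y i))) :=
        ENNReal.tsum_le_tsum fun _ =>
          (ENNReal.ofReal_le_ofReal (Real.exp_neg_convexComb_le_add hθ₀ hθ₁)).trans
            ENNReal.ofReal_add_le
    _ = ∑' i, ENNReal.ofReal (Real.exp (-x i)) + ∑' i, ENNReal.ofReal (Real.exp (-y i)) :=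
        ENNReal.tsum_add
    _ < ⊤ := ENNReal.add_lt_top.mpr ⟨hx, hy⟩

section critExp

variable {I : Type*} {w : I → ℝ}

lemma tsum_ofReal_exp_neg_lt_top_of_critExp_lt (hw : ∀ i, 0 ≤ w i) {s : ℝ}
    (h : critExp w < ENNReal.ofReal s) :
    ∑' i, ENNReal.ofReal (Real.exp (-(s * w i))) < ⊤ := by
  obtain ⟨_, ⟨s₀, -, rfl, hconv⟩, hs₀s⟩ := sInf_lt_iff.mp h
  have hs₀s : s₀ ≤ s := ((ENNReal.ofReal_lt_ofReal_iff'.mp hs₀s).1).le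
  refine lt_of_le_of_lt (ENNReal.tsum_le_tsum fun i => ?_) hconv
  exact ENNReal.ofReal_le_ofReal <| Real.exp_le_exp.mpr <|
    neg_le_neg <| mul_le_mul_of_nonneg_right hs₀s (hw i)

lemma critExp_le_ofReal {c : ℝ}
    (h : ∀ s, c < s → 0 < s → ∑' i, ENNReal.ofReal (Real.exp (-(s * w i))) < ⊤) :
    critExp w ≤ ENNReal.ofReal c := by
  by_contra! hlt
  obtain ⟨r, -, hcr, hr⟩ := ENNReal.lt_iff_exists_real_btwn.mp hlt
  obtain ⟨hcr, hr₀⟩ := ENNReal.ofReal_lt_ofReal_iff'.mp hcr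
  exact hr.not_ge (sInf_le ⟨r, hr₀, rfl, h r hcr hr₀⟩)

end critExp

theorem stmt6_general {I : Type*} (u v : I → ℝ)
    (hu : ∀ i, 0 ≤ u i) (hv : ∀ i, 0 ≤ v i)
    (h₁ h₂ : ℝ) (hh₁ : 0 < h₁) (hh₂ : 0 < h₂)
    (hcu : critExp u = ENNReal.ofReal h₁) (hcv : critExp v = ENNReal.ofReal h₂)
    (a b : ℝ) (ha : 0 < a) (hb : 0 < b) :
    critExp (fun i => a * u i + b * v i) ≤
      ENNReal.ofReal (h₁ * h₂ / (b * h₁ + a * h₂)) := by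
  set D := b * h₁ + a * h₂
  have hD : 0 < D := by positivity
  refine critExp_le_ofReal fun s hs _ => ?_
  have hsD : h₁ * h₂ < s * D := (div_lt_iff₀ hD).mp hs
  have hp : critExp u < ENNReal.ofReal (s * D / h₂) := by
    rw [hcu, ENNReal.ofReal_lt_ofReal_iff (by positivity), lt_div_iff₀ hh₂]
    exact hsD
  have hq : critExp v < ENNReal.ofReal (s * D / h₁) := by
    rw [hcv, ENNReal.ofReal_lt_ofReal_iff (by positivity), lt_div_iff₀ hh₁]
    linarith
  have hθ₁ : a * h₂ / D ≤ 1 := (div_le_one hD).mpr (by nlinarith)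
  have hcomb : ∀ i, s * (a * u i + b * v i) =
      a * h₂ / D * (s * D / h₂ * u i) + (1 - a * h₂ / D) * (s * D / h₁ * v i) := by
    intro i
    field_simp
    ring
  simpa only [hcomb] using tsum_ofReal_exp_neg_convexComb_lt_top (by positivity) hθ₁
    (tsum_ofReal_exp_neg_lt_top_of_critExp_lt hu hp)
    (tsum_ofReal_exp_neg_lt_top_of_critExp_lt hv hq)

theorem stmt6 {I : Type*} [Countable I] (u v : I → ℝ)
    (hu : ∀ i, 0 ≤ u i) (hv : ∀ i, 0 ≤ v i)
    (h₁ h₂ : ℝ) (hh₁ : 0 < h₁) (hh₂ : 0 < h₂)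
    (hcu : critExp u = ENNReal.ofReal h₁) (hcv : critExp v = ENNReal.ofReal h₂)
    (a b : ℝ) (ha : 0 < a) (hb : 0 < b) :
    critExp (fun i => a * u i + b * v i) ≤
      ENNReal.ofReal (h₁ * h₂ / (b * h₁ + a * h₂)) :=
  stmt6_general u v hu hv h₁ h₂ hh₁ hh₂ hcu hcv a b ha hb
end

section
/- Let λ ∈ ℂ with |λ| > 1 and let a, b, c, d ∈ ℂ with a·d − b·c = 1 and a ≠ 0. Let A be the 2×2 complex matrix with diagonal entries λ and λ⁻¹ and zero off-diagonal entries, and let B be the 2×2 complex matrix with rows (a, b) and (c, d). Then there exist K > 0 and N ∈ ℕ such that for every n ≥ N the matrix AⁿB has an eigenvalue μ_n with |μ_n| > 1, and |log|μ_n| − (n·log|λ| + log|a| + Re(λ^{−2n}·(a·d − 1)/a²))| ≤ K·|λ|^{−4n}. -/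
/-!
`Aⁿ B` has determinant `1` and trace `x + y` with `x = λⁿ a`, `y = λ⁻ⁿ d`, so its
eigenvalues are `μ, 1/μ` with `μ + 1/μ = x + y`; note `x y = a d` is independent of `n`.
For the dominant eigenvalue, `μ = x (1 + u)` with `u = (y - 1/μ) / x = O(|x|⁻²)`, and
`u - (x y - 1) / x² = μ⁻¹ (y - μ⁻¹) / x² = O(|x|⁻⁴)`. Since `log |1 + u| = Re u + O(|u|²)`,
this gives `log |μ| = log |x| + Re ((x y - 1) / x²) + O(|x|⁻⁴)`.
-/

open Polynomial Filter

lemma Matrix.pow_diag_fin_two_mul {R : Type*} [CommRing R] (l m a b c d : R) (n : ℕ) :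
    (!![l, 0; 0, m] : Matrix (Fin 2) (Fin 2) R) ^ n * !![a, b; c, d] =
      !![l ^ n * a, l ^ n * b; m ^ n * c, m ^ n * d] := by
  induction n with
  | zero => simp
  | succ n ih => rw [pow_succ', Matrix.mul_assoc, ih, mul_fin_two]; ring_nf

lemma Matrix.isRoot_charpoly_fin_two {R : Type*} [CommRing R] [Nontrivial R]
    (M : Matrix (Fin 2) (Fin 2) R) {μ μ' : R} (hsum : μ + μ' = M.trace) (hprod : μ * μ' = M.det) :
    M.charpoly.IsRoot μ := by
  rw [charpoly_fin_two, IsRoot, ← hsum, ← hprod]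
  simp only [eval_add, eval_sub, eval_mul, eval_pow, eval_X, eval_C]
  ring

lemma Complex.exists_add_eq_mul_eq_norm_le (t p : ℂ) :
    ∃ μ μ' : ℂ, μ + μ' = t ∧ μ * μ' = p ∧ ‖μ'‖ ≤ ‖μ‖ := by
  obtain ⟨s, hs⟩ := IsAlgClosed.exists_pow_nat_eq (t ^ 2 - 4 * p) two_pos
  have hsum : (t + s) / 2 + (t - s) / 2 = t := by ring
  have hprod : (t + s) / 2 * ((t - s) / 2) = p := by linear_combination (-1 / 4 : ℂ) * hs
  rcases le_total ‖(t - s) / 2‖ ‖(t + s) / 2‖ with h | h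
  · exact ⟨_, _, hsum, hprod, h⟩
  · exact ⟨_, _, by rw [add_comm, hsum], by rw [mul_comm, hprod], h⟩

lemma Complex.abs_log_norm_one_add_sub_re_le {w : ℂ} (hw : ‖w‖ ≤ 1 / 2) :
    |Real.log ‖1 + w‖ - w.re| ≤ ‖w‖ ^ 2 := by
  have hinv : (1 - ‖w‖)⁻¹ ≤ 2 := by
    rw [inv_le_comm₀ (by linarith) two_pos]; linarith
  calc |Real.log ‖1 + w‖ - w.re| = |(log (1 + w) - w).re| := by rw [sub_re, log_re]
    _ ≤ ‖log (1 + w) - w‖ := abs_re_le_norm _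
    _ ≤ ‖w‖ ^ 2 * (1 - ‖w‖)⁻¹ / 2 := norm_log_one_add_sub_self_le (by linarith)
    _ ≤ ‖w‖ ^ 2 := by nlinarith [sq_nonneg ‖w‖]

lemma norm_mul_le_of_add_eq_of_mul_eq_one {x y μ μ' : ℂ} (hsum : μ + μ' = x + y)
    (hprod : μ * μ' = 1) (hle : ‖μ'‖ ≤ ‖μ‖) (hy : 2 * ‖y‖ ≤ ‖x‖) : ‖μ'‖ * ‖x‖ ≤ 4 := by
  have hnorm : ‖μ‖ * ‖μ'‖ = 1 := by rw [← norm_mul, hprod, norm_one]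
  have hx : ‖x‖ ≤ 4 * ‖μ‖ := by
    have := norm_le_add_norm_add x y
    rw [← hsum] at this
    linarith [norm_add_le μ μ']
  nlinarith [norm_nonneg μ']

lemma abs_log_norm_sub_le_of_add_eq_of_mul_eq_one {x y μ μ' : ℂ} (hsum : μ + μ' = x + y)
    (hprod : μ * μ' = 1) (hle : ‖μ'‖ ≤ ‖μ‖) (hx : 2 * (‖x * y‖ + 4) ≤ ‖x‖ ^ 2) :
    1 < ‖μ‖ ∧ |Real.log ‖μ‖ - (Real.log ‖x‖ + ((x * y - 1) / x ^ 2).re)| ≤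
      (‖x * y‖ + 4) * (‖x * y‖ + 8) / ‖x‖ ^ 4 := by
  set m := ‖x * y‖
  set r := ‖x‖
  have hm : 0 ≤ m := norm_nonneg _
  have hr : 2 < r := by nlinarith [norm_nonneg x]
  have hx0 : x ≠ 0 := norm_pos_iff.mp (by linarith)
  have hyr : ‖y‖ * r = m := by rw [mul_comm, ← norm_mul]
  have hμ' : ‖μ'‖ * r ≤ 4 := norm_mul_le_of_add_eq_of_mul_eq_one hsum hprod hle (by nlinarith)
  have hyμ' : ‖y - μ'‖ * r ≤ m + 4 := by
    nlinarith [norm_sub_le y μ']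
  obtain ⟨u, hyu⟩ : ∃ u, y - μ' = x * u := ⟨(y - μ') / x, by field_simp⟩
  have hμ : μ = x * (1 + u) := by linear_combination hsum + hyu
  have huv : u - (x * y - 1) / x ^ 2 = μ' * u / x := by
    field_simp; linear_combination μ' * hsum - hprod + (μ' - x) * hyu
  have hu : ‖u‖ * r ^ 2 ≤ m + 4 := by
    rw [hyu, norm_mul] at hyμ'; nlinarith
  have hu_half : ‖u‖ ≤ 1 / 2 := by nlinarith [norm_nonneg u]
  have huv_le : ‖u - (x * y - 1) / x ^ 2‖ * r ^ 4 ≤ 4 * (m + 4) := by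
    rw [huv, norm_div, norm_mul]
    calc ‖μ'‖ * ‖u‖ / r * r ^ 4 = (‖μ'‖ * r) * (‖u‖ * r ^ 2) := by field_simp
      _ ≤ 4 * (m + 4) := by gcongr
  have h1u : 1 / 2 ≤ ‖1 + u‖ := by linarith [norm_le_add_norm_add (1 : ℂ) u, norm_one (α := ℂ)]
  have hμr : ‖μ‖ = r * ‖1 + u‖ := by rw [hμ, norm_mul]
  refine ⟨by nlinarith, ?_⟩
  rw [hμr, Real.log_mul (by positivity) (by positivity), le_div_iff₀ (by positivity)]
  calc |Real.log r + Real.log ‖1 + u‖ - (Real.log r + ((x * y - 1) / x ^ 2).re)| * r ^ 4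
      = |(Real.log ‖1 + u‖ - u.re) + (u - (x * y - 1) / x ^ 2).re| * r ^ 4 := by
        rw [Complex.sub_re]; ring_nf
    _ ≤ (‖u‖ ^ 2 + ‖u - (x * y - 1) / x ^ 2‖) * r ^ 4 := by
        gcongr
        exact (abs_add_le _ _).trans (add_le_add (Complex.abs_log_norm_one_add_sub_re_le hu_half)
          (Complex.abs_re_le_norm _))
    _ = (‖u‖ * r ^ 2) ^ 2 + ‖u - (x * y - 1) / x ^ 2‖ * r ^ 4 := by ring
    _ ≤ (m + 4) ^ 2 + 4 * (m + 4) := by gcongr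
    _ = (m + 4) * (m + 8) := by ring

theorem stmt9 (lam : ℂ) (hlam : 1 < ‖lam‖)
    (a b c d : ℂ) (hdet : a * d - b * c = 1) (ha : a ≠ 0) :
    ∃ K : ℝ, 0 < K ∧ ∃ N : ℕ, ∀ n : ℕ, N ≤ n →
      ∃ μ : ℂ,
        (Matrix.charpoly ((!![lam, 0; 0, lam⁻¹] : Matrix (Fin 2) (Fin 2) ℂ) ^ n *
          !![a, b; c, d])).IsRoot μ ∧
        1 < ‖μ‖ ∧
        |Real.log (‖μ‖) -
            ((n : ℝ) * Real.log (‖lam‖) + Real.log (‖a‖) +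
              (lam ^ (-(2 * (n : ℤ))) * (a * d - 1) / a ^ 2).re)| ≤
          K * ‖lam‖ ^ (-(4 * (n : ℤ))) := by
  have hlam0 : lam ≠ 0 := norm_pos_iff.mp (one_pos.trans hlam)
  set m := ‖a * d‖
  refine ⟨(m + 4) * (m + 8) / ‖a‖ ^ 4, by positivity, ?_⟩
  have hgrow : Tendsto (fun n : ℕ ↦ ‖lam ^ n * a‖ ^ 2) atTop atTop := by
    simp only [norm_mul, norm_pow]
    exact (tendsto_pow_atTop two_ne_zero).comp
      ((tendsto_pow_atTop_atTop_of_one_lt hlam).atTop_mul_const (norm_pos_iff.mpr ha))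
  obtain ⟨N, hN⟩ := eventually_atTop.mp (hgrow.eventually_ge_atTop (2 * (m + 4)))
  refine ⟨N, fun n hn ↦ ?_⟩
  have hxy : lam ^ n * a * (lam⁻¹ ^ n * d) = a * d := by
    rw [inv_pow]; field_simp
  obtain ⟨μ, μ', hsum, hprod, hle⟩ :=
    Complex.exists_add_eq_mul_eq_norm_le (lam ^ n * a + lam⁻¹ ^ n * d) 1
  obtain ⟨hμ1, hlog⟩ := abs_log_norm_sub_le_of_add_eq_of_mul_eq_one hsum hprod hle
    (by rw [hxy]; exact hN n hn)
  refine ⟨μ, Matrix.isRoot_charpoly_fin_two _ (μ' := μ') ?_ ?_, hμ1, ?_⟩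
  · rw [Matrix.pow_diag_fin_two_mul, Matrix.trace_fin_two_of, hsum]
  · rw [Matrix.det_mul, Matrix.det_pow, Matrix.det_fin_two_of, Matrix.det_fin_two_of, hdet, hprod]
    simp [hlam0]
  · have hlogx : Real.log ‖lam ^ n * a‖ = n * Real.log ‖lam‖ + Real.log ‖a‖ := by
      rw [norm_mul, norm_pow, Real.log_mul (by positivity) (norm_ne_zero_iff.mpr ha),
        Real.log_pow]
    have hv : (a * d - 1) / (lam ^ n * a) ^ 2 = lam ^ (-(2 * (n : ℤ))) * (a * d - 1) / a ^ 2 := by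
      rw [zpow_neg, mul_comm 2, zpow_mul, zpow_natCast]
      field_simp
    have hK : (m + 4) * (m + 8) / ‖lam ^ n * a‖ ^ 4 =
        (m + 4) * (m + 8) / ‖a‖ ^ 4 * ‖lam‖ ^ (-(4 * (n : ℤ))) := by
      rw [zpow_neg, mul_comm 4, zpow_mul, zpow_natCast, norm_mul, norm_pow]
      field_simp
    rwa [hxy, hlogx, hv, hK] at hlog
end

section
/- Let λ ∈ ℂ with |λ| > 1 and λ² ∈ ℝ, let a, d ∈ ℂ, and let N ∈ ℕ. If a²·λ^{2n} + 2·a·d + d²·λ^{−2n} is a real number for every n ≥ N, then a², a·d, and d² are all real. -/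
/-! If `μ = λ²` is real, the imaginary part of `a²λ²ⁿ + 2ad + d²λ⁻²ⁿ` is
`Im(a²) μⁿ + 2 Im(ad) + Im(d²) μ⁻ⁿ`. A combination `x rⁿ + y + z r⁻ⁿ` vanishing at three consecutive
`n` has `x = y = z = 0` as soon as the nodes `r, 1, r⁻¹` are distinct (a Vandermonde system), and
`|μ| > 1` guarantees this. -/

theorem eq_zero_of_mul_pow_add_add_mul_inv_pow_eq_zero {K : Type*} [Field K] {r x y z : K}
    (hr0 : r ≠ 0) (hr : r ^ 2 ≠ 1) (N : ℕ)
    (h : ∀ n, N ≤ n → x * r ^ n + y + z * r⁻¹ ^ n = 0) :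
    x = 0 ∧ y = 0 ∧ z = 0 := by
  have hr1 : r - 1 ≠ 0 := fun h1 ↦ hr (by rw [sub_eq_zero.mp h1, one_pow])
  have hr2 : r ^ 2 - 1 ≠ 0 := sub_ne_zero.mpr hr
  set X := x * r ^ N
  set Z := z * r⁻¹ ^ N
  have E0 : X + y + Z = 0 := h N le_rfl
  have E1 : X * r ^ 2 + y * r + Z = 0 := by
    linear_combination r * h (N + 1) (by omega) - Z * mul_inv_cancel₀ hr0
  have E2 : X * r ^ 4 + y * r ^ 2 + Z = 0 := by
    linear_combination r ^ 2 * h (N + 2) (by omega) - Z * (r * r⁻¹ + 1) * mul_inv_cancel₀ hr0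
  have hX : X * (r * ((r - 1) * (r ^ 2 - 1))) = 0 := by
    linear_combination E2 - E1 - r * (E1 - E0)
  have hy : y * (r * (r - 1) ^ 2) = 0 := by
    linear_combination r ^ 2 * E1 - E2 + E1 - r ^ 2 * E0
  have hX0 : X = 0 := (mul_eq_zero.mp hX).resolve_right (by simp [hr0, hr1, hr2])
  have hy0 : y = 0 := (mul_eq_zero.mp hy).resolve_right (by simp [hr0, hr1])
  refine ⟨by simpa [X, hr0] using hX0, hy0, ?_⟩
  simpa [Z, hr0] using (by linear_combination E0 - hX0 - hy0 : Z = 0)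

theorem Complex.exists_ofReal_eq_of_im_eq_zero {z : ℂ} (h : z.im = 0) : ∃ r : ℝ, z = r :=
  ⟨z.re, Complex.ext rfl h⟩

theorem stmt10 (lam : ℂ) (hlam : 1 < ‖lam‖)
    (hlamSqReal : ∃ r : ℝ, lam ^ 2 = (r : ℂ))
    (a d : ℂ) (N : ℕ)
    (h : ∀ n : ℕ, N ≤ n → ∃ t : ℝ,
      a ^ 2 * lam ^ (2 * (n : ℤ)) + 2 * (a * d) + d ^ 2 * lam ^ (-(2 * (n : ℤ))) = (t : ℂ)) :
    (∃ r : ℝ, a ^ 2 = (r : ℂ)) ∧ (∃ r : ℝ, a * d = (r : ℂ)) ∧ (∃ r : ℝ, d ^ 2 = (r : ℂ)) := by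
  obtain ⟨μ, hμ⟩ := hlamSqReal
  have hμ1 : 1 < |μ| := by
    rw [← Real.norm_eq_abs, ← Complex.norm_real, ← hμ, norm_pow]
    nlinarith
  have hμ0 : μ ≠ 0 := by rintro rfl; norm_num at hμ1
  have hμ2 : μ ^ 2 ≠ 1 := by
    rw [← sq_abs]; nlinarith
  have hpow (n : ℕ) : lam ^ (2 * (n : ℤ)) = ((μ ^ n : ℝ) : ℂ) := by
    rw [zpow_mul, zpow_natCast, zpow_ofNat, hμ, Complex.ofReal_pow]
  have him : ∀ n, N ≤ n → (a ^ 2).im * μ ^ n + (2 * (a * d)).im + (d ^ 2).im * μ⁻¹ ^ n = 0 := by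
    intro n hn
    obtain ⟨t, ht⟩ := h n hn
    have := congrArg Complex.im ht
    rw [zpow_neg, hpow, ← Complex.ofReal_inv, ← inv_pow] at this
    simpa only [Complex.add_im, Complex.im_mul_ofReal, Complex.ofReal_im] using this
  obtain ⟨hx, hy, hz⟩ := eq_zero_of_mul_pow_add_add_mul_inv_pow_eq_zero hμ0 hμ2 N him
  exact ⟨Complex.exists_ofReal_eq_of_im_eq_zero hx,
    Complex.exists_ofReal_eq_of_im_eq_zero (by simpa using hy),
    Complex.exists_ofReal_eq_of_im_eq_zero hz⟩
end
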